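/- Let p = (p₁, p₂) ∈ ℝ² with p₂ ≥ 0, and let dist denote the Euclidean distance. Then {q = (q₁,q₂) ∈ ℝ² : dist q p ≤ p₂ + |q₂|} = {q : 0 ≤ q₂ ∧ (q₁ − p₁)² ≤ 4·p₂·q₂} ∪ {q : q₁ = p₁ ∧ q₂ ≤ 0}. (For infinite highway speed, the walking region of a point p above the highway is the region bounded by the parabola with focus p that is tangent to the x-axis at the projection of p, together with the vertical ray below that projection.) -/

import Mathlib

/-- A point of the Euclidean plane given by its coordinates. -/
noncomputable def pt (x y : ℝ) : EuclideanSpace ℝ (Fin 2) := WithLp.toLp 2 ![x, y]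

/-- For infinite highway speed, the walking region of a point
p = (p₁,p₂) above the highway (the x-axis) is the region bounded by the parabola
with focus p tangent to the x-axis at the projection of p, together with the
vertical ray below that projection. -/
theorem walking_region_eq_parabola (p₁ p₂ : ℝ) (hp : 0 ≤ p₂) :
    {q : EuclideanSpace ℝ (Fin 2) | dist q (pt p₁ p₂) ≤ p₂ + |q 1|} =
      {q : EuclideanSpace ℝ (Fin 2) | 0 ≤ q 1 ∧ (q 0 - p₁) ^ 2 ≤ 4 * p₂ * q 1} ∪
        {q : EuclideanSpace ℝ (Fin 2) | q 0 = p₁ ∧ q 1 ≤ 0} := by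
  ext q
  have hd : dist q (pt p₁ p₂) = Real.sqrt ((q 0 - p₁) ^ 2 + (q 1 - p₂) ^ 2) := by
    rw [EuclideanSpace.dist_eq]
    congr 1
    simp [Fin.sum_univ_two, pt, Real.dist_eq, sq_abs]
  have hb : (0:ℝ) ≤ p₂ + |q 1| := by positivity
  simp only [Set.mem_setOf_eq, Set.mem_union, hd, Real.sqrt_le_iff]
  rcases le_or_gt 0 (q 1) with hy | hy
  · rw [abs_of_nonneg hy]
    constructor
    · rintro ⟨-, h⟩
      left
      exact ⟨hy, by nlinarith⟩
    · rintro (⟨-, h⟩ | ⟨h1, h2⟩)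
      · exact ⟨by nlinarith, by linarith⟩
      · have hy0 : q 1 = 0 := le_antisymm h2 hy
        rw [h1, hy0]
        constructor <;> nlinarith
  · rw [abs_of_neg hy]
    constructor
    · rintro ⟨-, h⟩
      right
      have h0 : (q 0 - p₁) ^ 2 ≤ 0 := by nlinarith
      have := sq_nonneg (q 0 - p₁)
      have : (q 0 - p₁) ^ 2 = 0 := le_antisymm h0 this
      have := pow_eq_zero_iff (n := 2) (by norm_num) |>.mp this
      exact ⟨by linarith [sub_eq_zero.mp this], hy.le⟩
    · rintro (⟨h0, -⟩ | ⟨h1, h2⟩)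
      · linarith
      · rw [h1]
        constructor <;> nlinarith
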